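/- For every natural number n and every real number r ≠ 0, the function R_n is twice differentiable at r and satisfies the Bessel-type differential equation R_n''(r) - (2n / r) · R_n'(r) + R_n(r) = 0. -/

import Mathlib

/-!
Substituting `x = r t` gives `R n r = r ^ (2n+1) * G n r` with
`G n r = ∫₀¹ w_n(t) cos (r t) dt` and `w_n(t) = (1 - t²)ⁿ / (2ⁿ n!)`. The weights satisfy
`w_{n+1}' = -t w_n` and `(1 - t²) w_n = (2n+2) w_{n+1}`, so differentiating under the integral
sign and integrating the derivative of `w_{n+1}(t) sin (r t)` over `[0, 1]` yields
`r (G'' + G) + (2n+2) G' = 0`. The substitution `y = r ^ (2n+1) u` turns this equation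
into `y'' - (2n/r) y' + y = 0`.
-/

open MeasureTheory intervalIntegral

/-- Hermite's integral `R_n(r) = ∫_0^r ((r² - x²)ⁿ / (2ⁿ n!)) cos x dx`. -/
noncomputable def R (n : ℕ) (r : ℝ) : ℝ :=
  ∫ x in (0:ℝ)..r, ((r ^ 2 - x ^ 2) ^ n / (2 ^ n * n.factorial)) * Real.cos x

open Real

theorem hasDerivAt_integral_mul_comp_mul {w g g' : ℝ → ℝ} {a b C : ℝ} (hw : Continuous w)
    (hg : ∀ x, HasDerivAt g (g' x) x) (hg' : Continuous g') (hC : ∀ x, |g' x| ≤ C) (r : ℝ) :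
    HasDerivAt (fun r => ∫ t in a..b, w t * g (r * t)) (∫ t in a..b, w t * t * g' (r * t)) r := by
  have hgc : Continuous g := continuous_iff_continuousAt.2 fun x => (hg x).continuousAt
  refine (hasDerivAt_integral_of_dominated_loc_of_deriv_le (𝕜 := ℝ) (E := ℝ) (μ := volume)
    (F := fun r t => w t * g (r * t)) (F' := fun r t => w t * t * g' (r * t))
    (bound := fun t => |w t * t| * C) Filter.univ_mem (.of_forall fun x => ?_) ?_ ?_
    (.of_forall fun t _ x _ => ?_) ?_ (.of_forall fun t _ x _ => ?_)).2
  · exact (by fun_prop : Continuous fun t => w t * g (x * t)).aestronglyMeasurable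
  · exact (by fun_prop : Continuous fun t => w t * g (r * t)).intervalIntegrable _ _
  · exact (by fun_prop : Continuous fun t => w t * t * g' (r * t)).aestronglyMeasurable
  · rw [norm_mul, Real.norm_eq_abs]
    exact mul_le_mul_of_nonneg_left (hC _) (abs_nonneg _)
  · exact (by fun_prop : Continuous fun t => |w t * t| * C).intervalIntegrable _ _
  · simpa [mul_assoc, mul_comm t] using
      ((hg (x * t)).comp x ((hasDerivAt_id x).mul_const t)).const_mul (w t)

noncomputable def hermiteWeight (n : ℕ) (t : ℝ) : ℝ := (1 - t ^ 2) ^ n / (2 ^ n * n.factorial)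

theorem continuous_hermiteWeight (n : ℕ) : Continuous (hermiteWeight n) := by
  unfold hermiteWeight
  fun_prop

theorem hasDerivAt_hermiteWeight_succ (n : ℕ) (t : ℝ) :
    HasDerivAt (hermiteWeight (n + 1)) (-(t * hermiteWeight n t)) t := by
  refine ((((hasDerivAt_pow 2 t).const_sub 1).pow (n + 1)).div_const
    (2 ^ (n + 1) * ((n + 1).factorial : ℝ))).congr_deriv ?_
  simp only [hermiteWeight, Nat.factorial_succ, Nat.add_sub_cancel]
  push_cast
  field_simp
  ring

theorem one_sub_sq_mul_hermiteWeight (n : ℕ) (t : ℝ) :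
    (1 - t ^ 2) * hermiteWeight n t = (2 * n + 2) * hermiteWeight (n + 1) t := by
  simp only [hermiteWeight, Nat.factorial_succ]
  push_cast
  field_simp
  ring

/-- `sphericalBesselDivPow n r = j_n(r) / r ^ n` for the spherical Bessel function `j_n`. -/
noncomputable def sphericalBesselDivPow (n : ℕ) (r : ℝ) : ℝ :=
  ∫ t in (0:ℝ)..1, hermiteWeight n t * cos (r * t)

theorem R_eq_pow_mul_sphericalBesselDivPow (n : ℕ) (r : ℝ) :
    R n r = r ^ (2 * n + 1) * sphericalBesselDivPow n r := by
  have hsubst := smul_integral_comp_mul_left (a := 0) (b := 1)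
    (fun x => (r ^ 2 - x ^ 2) ^ n / (2 ^ n * n.factorial) * cos x) r
  rw [mul_zero, mul_one] at hsubst
  rw [R, ← hsubst, sphericalBesselDivPow, smul_eq_mul, ← intervalIntegral.integral_const_mul,
    ← intervalIntegral.integral_const_mul]
  congr 1
  ext t
  rw [hermiteWeight, show r ^ 2 - (r * t) ^ 2 = r ^ 2 * (1 - t ^ 2) by ring, mul_pow, ← pow_mul]
  ring

theorem hasDerivAt_sphericalBesselDivPow (n : ℕ) (r : ℝ) :
    HasDerivAt (sphericalBesselDivPow n)
      (∫ t in (0:ℝ)..1, hermiteWeight n t * t * -sin (r * t)) r :=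
  hasDerivAt_integral_mul_comp_mul (continuous_hermiteWeight n) hasDerivAt_cos
    continuous_sin.neg (fun x => by simpa using abs_sin_le_one x) r

theorem deriv_sphericalBesselDivPow (n : ℕ) :
    deriv (sphericalBesselDivPow n) =
      fun r => ∫ t in (0:ℝ)..1, hermiteWeight n t * t * -sin (r * t) :=
  funext fun r => (hasDerivAt_sphericalBesselDivPow n r).deriv

theorem hasDerivAt_deriv_sphericalBesselDivPow (n : ℕ) (r : ℝ) :
    HasDerivAt (deriv (sphericalBesselDivPow n))
      (∫ t in (0:ℝ)..1, hermiteWeight n t * t * t * -cos (r * t)) r := by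
  rw [deriv_sphericalBesselDivPow]
  exact hasDerivAt_integral_mul_comp_mul (w := fun t => hermiteWeight n t * t)
    (g := fun x => -sin x) (by have := continuous_hermiteWeight n; fun_prop)
    (fun x => (hasDerivAt_sin x).neg) continuous_cos.neg
    (fun x => by simpa using abs_cos_le_one x) r

theorem sphericalBesselDivPow_ode (n : ℕ) (r : ℝ) :
    r * (deriv (deriv (sphericalBesselDivPow n)) r + sphericalBesselDivPow n r) +
      (2 * n + 2) * deriv (sphericalBesselDivPow n) r = 0 := by
  have hw := continuous_hermiteWeight
  have hint (f : ℝ → ℝ) (hf : Continuous f) : IntervalIntegrable f volume 0 1 :=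
    hf.intervalIntegrable 0 1
  -- `t ↦ w_{n+1}(t) sin (r t)` vanishes at `t = 0` and at `t = 1`.
  have hFTC : ∫ t in (0:ℝ)..1, (-(t * hermiteWeight n t) * sin (r * t) +
      hermiteWeight (n + 1) t * (cos (r * t) * r)) = 0 := by
    rw [integral_eq_sub_of_hasDerivAt (f := fun t => hermiteWeight (n + 1) t * sin (r * t))
      (fun t _ => (hasDerivAt_hermiteWeight_succ n t).mul (hasDerivAt_const_mul r).sin)
      (hint _ (by fun_prop))]
    simp [hermiteWeight]
  rw [(hasDerivAt_deriv_sphericalBesselDivPow n r).deriv, deriv_sphericalBesselDivPow,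
    sphericalBesselDivPow]
  calc _ = (2 * n + 2) * ∫ t in (0:ℝ)..1, (-(t * hermiteWeight n t) * sin (r * t) +
        hermiteWeight (n + 1) t * (cos (r * t) * r)) := by
        rw [← intervalIntegral.integral_add (hint _ (by fun_prop)) (hint _ (by fun_prop)),
          ← intervalIntegral.integral_const_mul, ← intervalIntegral.integral_const_mul,
          ← intervalIntegral.integral_add (hint _ (by fun_prop)) (hint _ (by fun_prop)),
          ← intervalIntegral.integral_const_mul]
        congr 1
        ext t
        linear_combination r * cos (r * t) * one_sub_sq_mul_hermiteWeight n t
    _ = 0 := by rw [hFTC, mul_zero]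

theorem pow_succ_mul_ode {u : ℝ → ℝ} {m : ℕ} {r : ℝ} (hr : r ≠ 0) (hu : Differentiable ℝ u)
    (hu' : DifferentiableAt ℝ (deriv u) r)
    (hode : r * (deriv (deriv u) r + u r) + (m + 2) * deriv u r = 0) :
    DifferentiableAt ℝ (fun x => x ^ (m + 1) * u x) r ∧
      DifferentiableAt ℝ (deriv fun x => x ^ (m + 1) * u x) r ∧
      deriv (deriv fun x => x ^ (m + 1) * u x) r - (m / r) * deriv (fun x => x ^ (m + 1) * u x) r
        + r ^ (m + 1) * u r = 0 := by
  have hy : deriv (fun x => x ^ (m + 1) * u x) =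
      fun x => (m + 1) * x ^ m * u x + x ^ (m + 1) * deriv u x := funext fun x => by
    simpa using ((hasDerivAt_pow (m + 1) x).fun_mul (hu x).hasDerivAt).deriv
  have hy' := (((hasDerivAt_pow m r).const_mul ((m : ℝ) + 1)).fun_mul (hu r).hasDerivAt).fun_add
    ((hasDerivAt_pow (m + 1) r).fun_mul hu'.hasDerivAt)
  rw [← hy] at hy'
  refine ⟨(differentiable_pow _ r).mul (hu r), hy'.differentiableAt, ?_⟩
  have hpow : (m : ℝ) * r ^ (m - 1) * r = m * r ^ m := by
    rcases eq_or_ne m 0 with rfl | hm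
    · simp
    · rw [mul_assoc, pow_sub_one_mul hm]
  rw [hy'.deriv, hy]
  field_simp
  push_cast
  linear_combination r ^ (m + 1) * hode + (m + 1) * u r * hpow

theorem R_bessel_ode (n : ℕ) (r : ℝ) (hr : r ≠ 0) :
    DifferentiableAt ℝ (R n) r ∧ DifferentiableAt ℝ (deriv (R n)) r ∧
      deriv (deriv (R n)) r - (2 * (n : ℝ) / r) * deriv (R n) r + R n r = 0 := by
  have hR : R n = fun x => x ^ (2 * n + 1) * sphericalBesselDivPow n x :=
    funext (R_eq_pow_mul_sphericalBesselDivPow n)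
  have hode : r * (deriv (deriv (sphericalBesselDivPow n)) r + sphericalBesselDivPow n r) +
      ((2 * n : ℕ) + 2) * deriv (sphericalBesselDivPow n) r = 0 := by
    exact_mod_cast sphericalBesselDivPow_ode n r
  rw [hR]
  simpa using pow_succ_mul_ode hr (fun x => (hasDerivAt_sphericalBesselDivPow n x).differentiableAt)
    (hasDerivAt_deriv_sphericalBesselDivPow n r).differentiableAt hode
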